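/- arXiv:1702.03292 — 2 statements merged into one kernel-verified Lean document; each statement's English description precedes it below -/
import Mathlib

section
/- Let I be a homogeneous ideal in P = K[x_1,…,x_n], where K is a field of characteristic 0. Then for all i ∈ {1,…,n} and all d ∈ ℕ, the sectional matrix satisfies M_{P/I}(i, d+1) ≤ Σ_{j=1}^{i} M_{P/I}(j, d). -/
open MvPolynomial Finset

/-- dim_K of the degree-`d` homogeneous component of `P/I`. -/
noncomputable def quotDim (K : Type) [Field K] {n : ℕ}
    (I : Ideal (MvPolynomial (Fin n) K)) (d : ℕ) : ℕ :=
  Module.finrank K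
    ((MvPolynomial.homogeneousSubmodule (Fin n) K d).map
      (Ideal.Quotient.mkₐ K I).toLinearMap)

/-- `I + (L_1, …, L_m)` where `L_k = ∑ a, c k a • x_a`. -/
noncomputable def sectionIdeal {K : Type} [Field K] {n m : ℕ}
    (I : Ideal (MvPolynomial (Fin n) K)) (c : Fin m → Fin n → K) :
    Ideal (MvPolynomial (Fin n) K) :=
  I ⊔ Ideal.span (Set.range fun k : Fin m => ∑ a : Fin n, MvPolynomial.C (c k a) * MvPolynomial.X a)

/-- A property `Q` of `m`-tuples of coefficient vectors of linear forms holds *generically*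
if it holds whenever some fixed nonzero polynomial in the coefficients does not vanish
(i.e. on a nonempty Zariski-open set of tuples). -/
def Generically (K : Type) [Field K] (m n : ℕ) (Q : (Fin m → Fin n → K) → Prop) : Prop :=
  ∃ F : MvPolynomial (Fin m × Fin n) K, F ≠ 0 ∧
    ∀ c : Fin m → Fin n → K, MvPolynomial.eval (fun p => c p.1 p.2) F ≠ 0 → Q c

/-- `M` is the sectional matrix of `P/I`:
`M i d = dim_K (P/(I + (L_1,…,L_{n-i})))_d` for generic linear forms `L_1, …, L_{n-i}`. -/
def IsSectionalMatrix {K : Type} [Field K] {n : ℕ}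
    (I : Ideal (MvPolynomial (Fin n) K)) (M : ℕ → ℕ → ℕ) : Prop :=
  ∀ i ∈ Finset.Icc 1 n, ∀ d : ℕ,
    Generically K (n - i) n fun c => quotDim K (sectionIdeal I c) d = M i d

/-- An ideal of `MvPolynomial` is homogeneous (w.r.t. the standard grading). -/
def IsHomogeneousIdeal {K : Type} [Field K] {n : ℕ}
    (I : Ideal (MvPolynomial (Fin n) K)) : Prop :=
  ∀ f ∈ I, ∀ d : ℕ, MvPolynomial.homogeneousComponent d f ∈ I

/-- The truncation `⟨I_{≤δ}⟩`: the ideal generated by all homogeneous elements of `I`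
of degree at most `δ`. -/
noncomputable def truncation {K : Type} [Field K] {n : ℕ}
    (I : Ideal (MvPolynomial (Fin n) K)) (δ : ℕ) : Ideal (MvPolynomial (Fin n) K) :=
  Ideal.span { f | f ∈ I ∧ ∃ e ≤ δ, f.IsHomogeneous e }

/-- `I` is generated in degrees `≤ δ`. -/
def GeneratedInDegreesLE {K : Type} [Field K] {n : ℕ}
    (I : Ideal (MvPolynomial (Fin n) K)) (δ : ℕ) : Prop :=
  I = truncation I δ

/-- Change of coordinates by the matrix `g` : the algebra endomorphism `x_j ↦ ∑ a, g a j • x_a`. -/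
noncomputable def changeCoords {K : Type} [Field K] {n : ℕ} (g : Matrix (Fin n) (Fin n) K) :
    MvPolynomial (Fin n) K →ₐ[K] MvPolynomial (Fin n) K :=
  MvPolynomial.aeval fun j => ∑ a : Fin n, MvPolynomial.C (g a j) * MvPolynomial.X a

/-- The DegRevLex order (with `x_1 > x_2 > … > x_n`) on exponent vectors: `u < v` iff
`deg u < deg v`, or the degrees agree and the last index where they differ has `u` bigger. -/
def DegRevLexLT {n : ℕ} (u v : Fin n →₀ ℕ) : Prop :=
  u.degree < v.degree ∨
    (u.degree = v.degree ∧ ∃ a : Fin n, v a < u a ∧ ∀ b : Fin n, a < b → u b = v b)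

/-- `u` is the DegRevLex-leading exponent of the polynomial `f`. -/
def IsLeadingExponent {K : Type} [Field K] {n : ℕ}
    (f : MvPolynomial (Fin n) K) (u : Fin n →₀ ℕ) : Prop :=
  u ∈ f.support ∧ ∀ v ∈ f.support, v ≠ u → DegRevLexLT v u

/-- The DegRevLex leading-term ideal of `I`. -/
noncomputable def ltIdeal {K : Type} [Field K] {n : ℕ}
    (I : Ideal (MvPolynomial (Fin n) K)) : Ideal (MvPolynomial (Fin n) K) :=
  Ideal.span { m | ∃ f ∈ I, ∃ u : Fin n →₀ ℕ,
    IsLeadingExponent f u ∧ m = MvPolynomial.monomial u (1 : K) }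

/-- `J` is a monomial ideal. -/
def IsMonomialIdeal {K : Type} [Field K] {n : ℕ}
    (J : Ideal (MvPolynomial (Fin n) K)) : Prop :=
  ∃ S : Set (Fin n →₀ ℕ), J = Ideal.span ((fun u => MvPolynomial.monomial u (1 : K)) '' S)

/-- `J` is strongly stable: for every monomial `t ∈ J` and every `i < j` with `x_j ∣ t`,
the monomial `x_i · t / x_j` is in `J`. -/
def IsStronglyStable {K : Type} [Field K] {n : ℕ}
    (J : Ideal (MvPolynomial (Fin n) K)) : Prop :=
  ∀ u : Fin n →₀ ℕ, MvPolynomial.monomial u (1 : K) ∈ J →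
    ∀ i j : Fin n, i < j → u j ≠ 0 →
      MvPolynomial.monomial (u + Finsupp.single i 1 - Finsupp.single j 1) (1 : K) ∈ J

/-- `J` is the generic initial ideal `rgin(I)` of `I` with respect to DegRevLex:
a strongly stable monomial ideal which is the DegRevLex leading term ideal of `g(I)`
for all `g` in a nonempty Zariski-open subset of `GL_n(K)`. -/
def IsRgin {K : Type} [Field K] {n : ℕ}
    (I J : Ideal (MvPolynomial (Fin n) K)) : Prop :=
  IsMonomialIdeal J ∧ IsStronglyStable J ∧
    ∃ G : MvPolynomial (Fin n × Fin n) K, G ≠ 0 ∧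
      ∀ g : Matrix (Fin n) (Fin n) K, g.det ≠ 0 →
        MvPolynomial.eval (fun p => g p.1 p.2) G ≠ 0 →
          ltIdeal (I.map (changeCoords g)) = J

/-- The monomial `x^u` is a minimal (monomial) generator of the monomial ideal `J`. -/
def IsMinimalGen {K : Type} [Field K] {n : ℕ}
    (J : Ideal (MvPolynomial (Fin n) K)) (u : Fin n →₀ ℕ) : Prop :=
  MvPolynomial.monomial u (1 : K) ∈ J ∧
    ∀ a ∈ u.support, MvPolynomial.monomial (u - Finsupp.single a 1) (1 : K) ∉ J

/-- The exponent vector `u` involves only the first `i` variables `x_1, …, x_i`. -/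
def InFirstVars {n : ℕ} (i : ℕ) (u : Fin n →₀ ℕ) : Prop :=
  ∀ a ∈ u.support, (a : ℕ) < i

/-- `c` (on indices `j, j+1, …, d`) is the `d`-binomial expansion of `h`:
`h = C(c d, d) + C(c (d-1), d-1) + … + C(c j, j)` with `c d > c (d-1) > … > c j ≥ j ≥ 1`. -/
def IsBinomialExpansion (h d j : ℕ) (c : ℕ → ℕ) : Prop :=
  1 ≤ j ∧ j ≤ d ∧ j ≤ c j ∧ (∀ t, j ≤ t → t < d → c t < c (t + 1)) ∧
    h = ∑ t ∈ Finset.Icc j d, Nat.choose (c t) t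

/-- `P/J` has multiplicity (degree) `e`: writing the Hilbert series of `P/J` in reduced
form `h(t)/(1-t)^D` with `h(1) ≠ 0`, we have `e = h(1)`. -/
def HasMultiplicity (K : Type) [Field K] {n : ℕ}
    (J : Ideal (MvPolynomial (Fin n) K)) (e : ℕ) : Prop :=
  ∃ (D : ℕ) (h : Polynomial ℤ),
    (PowerSeries.mk fun d => (quotDim K J d : ℤ)) * (1 - PowerSeries.X) ^ D =
      (h : PowerSeries ℤ) ∧
    Polynomial.eval 1 h ≠ 0 ∧ (e : ℤ) = Polynomial.eval 1 h

/-- `F` is a GCD of the (homogeneous) ideal `J`, of degree `k`: `F` is a form of degree `k`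
with `J ⊆ (F)`, and no form of larger degree has this property. -/
def IsGCDOfDegree {K : Type} [Field K] {n : ℕ}
    (J : Ideal (MvPolynomial (Fin n) K)) (F : MvPolynomial (Fin n) K) (k : ℕ) : Prop :=
  F.IsHomogeneous k ∧ J ≤ Ideal.span {F} ∧
    ∀ (k' : ℕ) (G : MvPolynomial (Fin n) K),
      G.IsHomogeneous k' → J ≤ Ideal.span {G} → k' ≤ k

/-- `I` is saturated: `(I : m) = I`, where `m = (x_1, …, x_n)`. -/
def IsSaturatedIdeal {K : Type} [Field K] {n : ℕ}
    (I : Ideal (MvPolynomial (Fin n) K)) : Prop :=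
  Submodule.colon I (Ideal.span (Set.range (MvPolynomial.X : Fin n → MvPolynomial (Fin n) K))) = I

/-- The explicit polynomial `p_i(x) = Σ_{j=1}^{i} C(i−j+x−δ−1, i−j) · M(j,δ)`, where
`C(a, m)` is the polynomial binomial coefficient `a(a-1)⋯(a-m+1)/m!`. -/
noncomputable def secHilbPoly (i δ : ℕ) (M : ℕ → ℕ → ℕ) : Polynomial ℚ :=
  ∑ j ∈ Finset.Icc 1 i, (M j δ : ℚ) •
    ((Nat.factorial (i - j) : ℚ)⁻¹ •
      ∏ t ∈ Finset.range (i - j),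
        (Polynomial.X + Polynomial.C ((i : ℚ) - j - δ - 1 - t)))

/-!
Cutting a homogeneous ideal `J` by a linear form `L` loses, in degree `d + 1`, only the image of
multiplication by `L` on degree `d`:
`H_{P/J}(d + 1) ≤ H_{P/J}(d) + H_{P/(J + (L))}(d + 1)`.
Apply this along one sequence of linear forms `L_1, …, L_n`, starting from the section by
`L_1, …, L_{n-i}`, and telescope. After all `n` forms are added (linearly independent, so they
generate `(x_1, …, x_n)`) the degree `d + 1` part vanishes, and what remains is
`Σ_{j ≤ i} M(j, d)`. Since `K` is infinite, the finitely many Zariski-open conditions making each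
prefix of the sequence compute the sectional matrix can be met simultaneously.
-/

attribute [local instance] MvPolynomial.gradedAlgebra

instance {σ R : Type*} [Finite σ] [CommSemiring R] (d : ℕ) :
    Module.Finite R (homogeneousSubmodule σ R d) :=
  Module.Finite.iff_fg.mpr (homogeneousSubmodule_fg σ R d)

theorem Submodule.finrank_le_finrank_add_finrank_map {K V W : Type*} [DivisionRing K]
    [AddCommGroup V] [Module K V] [AddCommGroup W] [Module K W] (f : V →ₗ[K] W)
    {S T : Submodule K V} [FiniteDimensional K S] [FiniteDimensional K T]
    (h : S ⊓ LinearMap.ker f ≤ T) :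
    Module.finrank K S ≤ Module.finrank K T + Module.finrank K (S.map f) := by
  have hrank := LinearMap.finrank_range_add_finrank_ker (f.domRestrict S)
  have hker : Module.finrank K (LinearMap.ker (f.domRestrict S)) ≤ Module.finrank K T := by
    rw [LinearMap.ker_domRestrict, ← Submodule.finrank_map_subtype_eq,
      Submodule.map_comap_subtype]
    exact Submodule.finrank_mono h
  rw [LinearMap.range_domRestrict] at hrank
  omega

theorem homogeneousComponent_add_mul_of_isHomogeneous {σ R : Type*} [CommSemiring R]
    {p L : MvPolynomial σ R} {d e : ℕ} (hL : L.IsHomogeneous e) :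
    homogeneousComponent (d + e) (p * L) = homogeneousComponent d p * L := by
  simpa only [← DirectSum.Decomposition.decompose'_eq, decomposition.decompose'_apply] using
    DirectSum.coe_decompose_mul_add_of_right_mem (homogeneousSubmodule σ R) (a := p) (i := d) hL

section Generic

variable {σ K : Type*} [CommRing K]

def HoldsGenerically (Q : (σ → K) → Prop) : Prop :=
  ∃ F : MvPolynomial σ K, F ≠ 0 ∧ ∀ x, eval x F ≠ 0 → Q x

namespace HoldsGenerically

variable {Q R : (σ → K) → Prop}

theorem mono (hQ : HoldsGenerically Q) (h : ∀ x, Q x → R x) : HoldsGenerically R :=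
  let ⟨F, hF, hFQ⟩ := hQ
  ⟨F, hF, fun x hx => h x (hFQ x hx)⟩

theorem and [IsDomain K] (hQ : HoldsGenerically Q) (hR : HoldsGenerically R) :
    HoldsGenerically fun x => Q x ∧ R x := by
  obtain ⟨F, hF, hFQ⟩ := hQ
  obtain ⟨G, hG, hGR⟩ := hR
  refine ⟨F * G, mul_ne_zero hF hG, fun x hx => ?_⟩
  rw [map_mul] at hx
  exact ⟨hFQ x (left_ne_zero_of_mul hx), hGR x (right_ne_zero_of_mul hx)⟩

theorem forall_mem [IsDomain K] {ι : Type*} (s : Finset ι) {Q : ι → (σ → K) → Prop}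
    (hQ : ∀ i ∈ s, HoldsGenerically (Q i)) : HoldsGenerically fun x => ∀ i ∈ s, Q i x := by
  classical
  induction s using Finset.induction_on with
  | empty => exact ⟨1, one_ne_zero, fun _ _ i hi => absurd hi (Finset.notMem_empty i)⟩
  | insert i s _ ih =>
    refine ((hQ i (mem_insert_self i s)).and (ih fun j hj => hQ j (mem_insert_of_mem hj))).mono ?_
    exact fun x hx => (Finset.forall_mem_insert _ _ _).mpr hx

theorem comp_injective {τ : Type*} {f : σ → τ} (hf : Function.Injective f)
    (hQ : HoldsGenerically Q) : HoldsGenerically fun y : τ → K => Q (y ∘ f) := by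
  obtain ⟨F, hF, hFQ⟩ := hQ
  refine ⟨rename f F, (map_ne_zero_iff _ (rename_injective f hf)).mpr hF, fun y hy => ?_⟩
  rw [eval_rename] at hy
  exact hFQ _ hy

theorem exists_of_infinite [IsDomain K] [Infinite K] (hQ : HoldsGenerically Q) : ∃ x, Q x := by
  obtain ⟨F, hF, hFQ⟩ := hQ
  obtain ⟨x, hx⟩ : ∃ x, eval x F ≠ 0 := by
    by_contra! h
    exact hF (MvPolynomial.funext fun x => by simpa using h x)
  exact ⟨x, hFQ x hx⟩

end HoldsGenerically

end Generic

theorem Generically.holdsGenerically_seq {K : Type} [Field K] {m n : ℕ}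
    {Q : (Fin m → Fin n → K) → Prop} (h : Generically K m n Q) :
    HoldsGenerically fun x : ℕ × Fin n → K => Q fun k a => x (k, a) :=
  let ⟨F, hF, hFQ⟩ := h
  HoldsGenerically.comp_injective (Q := fun x : Fin m × Fin n → K => Q fun k a => x (k, a))
    (Fin.val_injective.prodMap Function.injective_id) ⟨F, hF, fun _ hx => hFQ _ hx⟩

theorem generically_det_ne_zero (K : Type) [Field K] (n : ℕ) :
    Generically K n n fun c => (Matrix.of c).det ≠ 0 := by
  have heval (c : Fin n → Fin n → K) :
      eval (fun p => c p.1 p.2) (Matrix.of fun i j => X (i, j)).det = (Matrix.of c).det := by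
    rw [RingHom.map_det]
    congr 1
    ext
    simp
  refine ⟨(Matrix.of fun i j => X (i, j)).det, fun h => ?_, fun c hc => by rwa [heval] at hc⟩
  have h1 := heval (1 : Matrix (Fin n) (Fin n) K)
  rw [h, map_zero] at h1
  exact zero_ne_one (h1.trans Matrix.det_one)

section Sectional

variable {K : Type} [Field K] {n : ℕ}

theorem isHomogeneousIdeal_iff {I : Ideal (MvPolynomial (Fin n) K)} :
    IsHomogeneousIdeal I ↔ I.IsHomogeneous (homogeneousSubmodule (Fin n) K) :=
  ⟨fun hI d f hf => (decomposition.decompose'_apply f d) ▸ hI f hf d,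
    fun hI _ hf d => homogeneousComponent_mem_of_mem hI hf d⟩

theorem isHomogeneous_linearForm (v : Fin n → K) :
    (∑ a, C (v a) * X a : MvPolynomial (Fin n) K).IsHomogeneous 1 :=
  IsHomogeneous.sum _ _ _ fun a _ => isHomogeneous_C_mul_X (v a) a

theorem IsHomogeneousIdeal.sectionIdeal {I : Ideal (MvPolynomial (Fin n) K)}
    (hI : IsHomogeneousIdeal I) {m : ℕ} (c : Fin m → Fin n → K) :
    IsHomogeneousIdeal (sectionIdeal I c) := by
  rw [isHomogeneousIdeal_iff] at hI ⊢
  refine hI.sup (Ideal.homogeneous_span _ _ ?_)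
  rintro _ ⟨k, rfl⟩
  exact ⟨1, isHomogeneous_linearForm (c k)⟩

theorem IsHomogeneousIdeal.exists_isHomogeneous_sub_mul_mem {J : Ideal (MvPolynomial (Fin n) K)}
    (hJ : IsHomogeneousIdeal J) {L f : MvPolynomial (Fin n) K} {d e : ℕ}
    (hL : L.IsHomogeneous e) (hf : f.IsHomogeneous (d + e)) (hfJ : f ∈ J ⊔ Ideal.span {L}) :
    ∃ g : MvPolynomial (Fin n) K, g.IsHomogeneous d ∧ f - g * L ∈ J := by
  obtain ⟨a, ha, _, hb, rfl⟩ := Submodule.mem_sup.mp hfJ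
  obtain ⟨p, rfl⟩ := Ideal.mem_span_singleton'.mp hb
  refine ⟨homogeneousComponent d p, homogeneousComponent_isHomogeneous d p, ?_⟩
  rw [← (homogeneousComponent_of_mem hf).trans (if_pos rfl), map_add,
    homogeneousComponent_add_mul_of_isHomogeneous hL, add_sub_cancel_right]
  exact hJ a ha _

theorem quotDim_add_le_add_quotDim_sup_span {J : Ideal (MvPolynomial (Fin n) K)}
    (hJ : IsHomogeneousIdeal J) {L : MvPolynomial (Fin n) K} {e : ℕ} (hL : L.IsHomogeneous e)
    (d : ℕ) :
    quotDim K J (d + e) ≤ quotDim K J d + quotDim K (J ⊔ Ideal.span {L}) (d + e) := by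
  let mk := (Ideal.Quotient.mkₐ K J).toLinearMap
  let ρ := (Ideal.Quotient.factorₐ K (le_sup_left : J ≤ J ⊔ Ideal.span {L})).toLinearMap
  have hker : (homogeneousSubmodule (Fin n) K (d + e)).map mk ⊓ LinearMap.ker ρ ≤
      ((homogeneousSubmodule (Fin n) K d).map mk).map (LinearMap.mulLeft K (mk L)) := by
    rintro _ ⟨⟨f, hf, rfl⟩, hρf⟩
    obtain ⟨g, hg, hfg⟩ := hJ.exists_isHomogeneous_sub_mul_mem hL hf
      (Ideal.Quotient.eq_zero_iff_mem.mp hρf)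
    refine ⟨mk g, ⟨g, hg, rfl⟩, ?_⟩
    simp only [LinearMap.mulLeft_apply, mk, AlgHom.toLinearMap_apply, ← map_mul, mul_comm L]
    exact (Ideal.Quotient.mk_eq_mk_iff_sub_mem _ _).mpr (sub_mem_comm_iff.mp hfg)
  calc quotDim K J (d + e)
      ≤ Module.finrank K (((homogeneousSubmodule (Fin n) K d).map mk).map
          (LinearMap.mulLeft K (mk L))) +
        Module.finrank K (((homogeneousSubmodule (Fin n) K (d + e)).map mk).map ρ) :=
        Submodule.finrank_le_finrank_add_finrank_map ρ hker
    _ ≤ quotDim K J d + quotDim K (J ⊔ Ideal.span {L}) (d + e) := by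
        gcongr
        · exact Submodule.finrank_map_le _ _
        · rw [← Submodule.map_comp]; rfl

theorem sectionIdeal_succ (I : Ideal (MvPolynomial (Fin n) K)) (c : ℕ → Fin n → K) (m : ℕ) :
    sectionIdeal I (fun k : Fin (m + 1) => c k) =
      sectionIdeal I (fun k : Fin m => c k) ⊔ Ideal.span {∑ a, C (c m a) * X a} := by
  rw [sectionIdeal, sectionIdeal, sup_assoc, ← Ideal.span_union, Set.union_singleton]
  congr 3
  ext
  simp [Fin.exists_fin_succ', eq_comm, or_comm]

theorem quotDim_sectionIdeal_le_sum {I : Ideal (MvPolynomial (Fin n) K)}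
    (hI : IsHomogeneousIdeal I) (c : ℕ → Fin n → K) (d : ℕ) {a b : ℕ} (hab : a ≤ b) :
    quotDim K (sectionIdeal I fun k : Fin a => c k) (d + 1) ≤
      ∑ m ∈ Ico a b, quotDim K (sectionIdeal I fun k : Fin m => c k) d +
        quotDim K (sectionIdeal I fun k : Fin b => c k) (d + 1) := by
  induction b, hab using Nat.le_induction with
  | base => simp
  | succ b hab ih =>
    have hstep := quotDim_add_le_add_quotDim_sup_span (hI.sectionIdeal fun k : Fin b => c k)
      (isHomogeneous_linearForm (c b)) d
    rw [← sectionIdeal_succ] at hstep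
    rw [sum_Ico_succ_top hab]
    omega

theorem X_mem_span_linearForms {c : Fin n → Fin n → K} (hc : (Matrix.of c).det ≠ 0)
    (a : Fin n) :
    X a ∈ Ideal.span (Set.range fun k => ∑ b, C (c k b) * X b) := by
  have hinv : (Matrix.of c)⁻¹ * Matrix.of c = 1 := Matrix.nonsing_inv_mul _ hc.isUnit
  have hrow : ∀ b, ∑ k, (Matrix.of c)⁻¹ a k * c k b = if a = b then 1 else 0 := fun b => by
    rw [← Matrix.one_apply, ← hinv, Matrix.mul_apply]
    rfl
  have hX : (X a : MvPolynomial (Fin n) K) =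
      ∑ k, C ((Matrix.of c)⁻¹ a k) * ∑ b, C (c k b) * X b := by
    simp_rw [mul_sum, ← mul_assoc, ← C_mul]
    rw [sum_comm]
    simp_rw [← sum_mul, ← map_sum, hrow]
    simp
  rw [hX]
  exact Ideal.sum_mem _ fun k _ => Ideal.mul_mem_left _ _ (Ideal.subset_span ⟨k, rfl⟩)

theorem quotDim_succ_eq_zero_of_X_mem {J : Ideal (MvPolynomial (Fin n) K)} (hX : ∀ a, X a ∈ J)
    (d : ℕ) : quotDim K J (d + 1) = 0 := by
  rw [quotDim, Submodule.finrank_eq_zero, Submodule.eq_bot_iff]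
  rintro _ ⟨f, hf, rfl⟩
  refine Ideal.Quotient.eq_zero_iff_mem.mpr
    (Ideal.span_le.mpr ?_ ((mem_ideal_span_X_image (s := Set.univ)).mpr ?_))
  · rintro _ ⟨a, -, rfl⟩
    exact hX a
  · intro u hu
    have hdeg : Finsupp.weight 1 u = d + 1 := hf (mem_support_iff.mp hu)
    obtain ⟨a, ha⟩ := Finsupp.ne_iff.mp (show u ≠ 0 by rintro rfl; simp at hdeg)
    exact ⟨a, Set.mem_univ a, ha⟩

theorem quotDim_sectionIdeal_succ_eq_zero (I : Ideal (MvPolynomial (Fin n) K))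
    {c : Fin n → Fin n → K} (hc : (Matrix.of c).det ≠ 0) (d : ℕ) :
    quotDim K (sectionIdeal I c) (d + 1) = 0 :=
  quotDim_succ_eq_zero_of_X_mem (fun a => Ideal.mem_sup_right (X_mem_span_linearForms hc a)) d

end Sectional

/-- For a homogeneous ideal `I` in `K[x_1,…,x_n]` (`char K = 0`),
`M_{P/I}(i, d+1) ≤ Σ_{j=1}^{i} M_{P/I}(j, d)` for all `i ∈ {1,…,n}` and `d ∈ ℕ`. -/
theorem sectionalMatrix_growth_le_sum
    {K : Type} [Field K] [CharZero K] {n : ℕ}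
    (I : Ideal (MvPolynomial (Fin n) K)) (hI : IsHomogeneousIdeal I)
    (M : ℕ → ℕ → ℕ) (hM : IsSectionalMatrix I M) :
    ∀ i ∈ Finset.Icc 1 n, ∀ d : ℕ,
      M i (d + 1) ≤ ∑ j ∈ Finset.Icc 1 i, M j d := by
  intro i hi d
  have hIcc : ∀ j ∈ Icc 1 i, j ∈ Icc 1 n := fun j hj =>
    Icc_subset_Icc_right (mem_Icc.mp hi).2 hj
  obtain ⟨x, hdet, hMi, hMj⟩ := ((generically_det_ne_zero K n).holdsGenerically_seq.and
    ((hM i hi (d + 1)).holdsGenerically_seq.and (HoldsGenerically.forall_mem _ fun j hj =>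
      (hM j (hIcc j hj) d).holdsGenerically_seq))).exists_of_infinite
  let c : ℕ → Fin n → K := fun k a => x (k, a)
  have hreflect := sum_Ico_reflect (fun m => quotDim K (sectionIdeal I fun k : Fin m => c k) d) 1
    (Nat.add_le_add_right (mem_Icc.mp hi).2 1)
  rw [Nat.add_sub_add_right, Nat.add_sub_cancel] at hreflect
  calc M i (d + 1) = quotDim K (sectionIdeal I fun k : Fin (n - i) => c k) (d + 1) := hMi.symm
    _ ≤ ∑ m ∈ Ico (n - i) n, quotDim K (sectionIdeal I fun k : Fin m => c k) d +
          quotDim K (sectionIdeal I fun k : Fin n => c k) (d + 1) :=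
        quotDim_sectionIdeal_le_sum hI c d (Nat.sub_le n i)
    _ = ∑ j ∈ Icc 1 i, M j d := by
        rw [quotDim_sectionIdeal_succ_eq_zero I hdet, add_zero, ← hreflect,
          Ico_add_one_right_eq_Icc]
        exact sum_congr rfl hMj
end

section
/- Let I be a saturated homogeneous ideal in P = K[x_1,…,x_n], where K is a field of characteristic 0. Then M_{P/I} has n-maximal growth in degree δ if and only if it has (n−1)-maximal growth in degree δ. -/
/-!
A generic linear form `L` is a nonzerodivisor on `P/I`: the zero divisors of `P/I` are the union
of its finitely many associated primes, and since `I` is saturated none of them contains `m`, so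
each one meets the space of linear forms in a proper subspace. As `K` is infinite, one `L` can
meet this and the genericity condition defining `M(n-1, -)` at once. Multiplication by `L`
gives an exact sequence `0 → (P/I)_δ → (P/I)_{δ+1} → (P/(I + (L)))_{δ+1} → 0`, that is
`M(n, δ+1) = M(n, δ) + M(n-1, δ+1)`, and after cancelling `M(n, δ)` the two growth conditions
become the same equation.
-/

open MvPolynomial Finset

section Generically

variable {K : Type} [Field K] {m n : ℕ} {Q R : (Fin m → Fin n → K) → Prop}

theorem Generically.mono (hQ : Generically K m n Q) (hQR : ∀ c, Q c → R c) :
    Generically K m n R :=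
  let ⟨F, hF, hFQ⟩ := hQ
  ⟨F, hF, fun c hc => hQR c (hFQ c hc)⟩

theorem Generically.and (hQ : Generically K m n Q) (hR : Generically K m n R) :
    Generically K m n fun c => Q c ∧ R c := by
  obtain ⟨F, hF, hFQ⟩ := hQ
  obtain ⟨G, hG, hGR⟩ := hR
  refine ⟨F * G, mul_ne_zero hF hG, fun c hc => ?_⟩
  rw [map_mul] at hc
  exact ⟨hFQ c (left_ne_zero_of_mul hc), hGR c (right_ne_zero_of_mul hc)⟩

theorem Generically.finset_forall {ι : Type*} {Q : ι → (Fin m → Fin n → K) → Prop}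
    (s : Finset ι) (hQ : ∀ i ∈ s, Generically K m n (Q i)) :
    Generically K m n fun c => ∀ i ∈ s, Q i c := by
  classical
  induction s using Finset.induction_on with
  | empty => exact ⟨1, one_ne_zero, fun c _ i hi => absurd hi (Finset.notMem_empty i)⟩
  | insert i s _ ih =>
    refine ((hQ i (mem_insert_self i s)).and
      (ih fun j hj => hQ j (mem_insert_of_mem hj))).mono fun c hc j hj => ?_
    rcases mem_insert.mp hj with rfl | hj
    exacts [hc.1, hc.2 j hj]

theorem Generically.exists [Infinite K] (hQ : Generically K m n Q) : ∃ c, Q c := by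
  obtain ⟨F, hF, hFQ⟩ := hQ
  obtain ⟨x, hx⟩ : ∃ x : Fin m × Fin n → K, eval x F ≠ 0 := by
    by_contra! h
    exact hF (MvPolynomial.funext fun x => by simp [h x])
  exact ⟨fun i a => x (i, a), hFQ _ hx⟩

end Generically

section LinearForm

variable {K : Type} [Field K] {n : ℕ}

noncomputable def linearForm : (Fin n → K) →ₗ[K] MvPolynomial (Fin n) K :=
  Fintype.linearCombination K X

theorem linearForm_apply (c : Fin n → K) : linearForm c = ∑ a, C (c a) * X a := by
  simp only [linearForm, Fintype.linearCombination_apply, smul_eq_C_mul]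

theorem isHomogeneous_linearForm_s17 (c : Fin n → K) : (linearForm c).IsHomogeneous 1 := by
  rw [linearForm_apply]
  exact IsHomogeneous.sum _ _ _ fun a _ => isHomogeneous_C_mul_X _ _

theorem sectionIdeal_one (I : Ideal (MvPolynomial (Fin n) K)) (c : Fin 1 → Fin n → K) :
    sectionIdeal I c = I ⊔ Ideal.span {linearForm (c 0)} := by
  simp only [sectionIdeal, Set.range_unique, linearForm_apply]
  rfl

theorem generically_dual_apply_ne_zero {f : Module.Dual K (Fin n → K)} (hf : f ≠ 0) :
    Generically K 1 n fun c => f (c 0) ≠ 0 := by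
  have heval : ∀ c : Fin 1 → Fin n → K,
      eval (fun p => c p.1 p.2) (∑ b, C (f (Pi.single b 1)) * X ((0 : Fin 1), b)) = f (c 0) := by
    intro c
    rw [LinearMap.pi_apply_eq_sum_univ f (c 0)]
    simp only [map_sum, map_mul, eval_C, eval_X, smul_eq_mul]
    refine Finset.sum_congr rfl fun b _ => ?_
    rw [mul_comm]
    congr 2
    ext j
    simp [Pi.single_apply, eq_comm]
  refine ⟨_, fun h0 => hf (LinearMap.ext fun v => ?_), fun c hc => by rwa [heval] at hc⟩
  simpa [h0] using (heval fun _ => v).symm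

theorem generically_linearForm_notMem {p : Submodule K (MvPolynomial (Fin n) K)} {a : Fin n}
    (ha : X a ∉ p) : Generically K 1 n fun c => linearForm (c 0) ∉ p := by
  have hT : Pi.single a 1 ∉ p.comap linearForm := by
    simpa [linearForm] using ha
  obtain ⟨f, hfa, hfT⟩ := Submodule.exists_dual_map_eq_bot_of_notMem hT inferInstance
  have hf : f ≠ 0 := fun hf => hfa (by rw [hf, LinearMap.zero_apply])
  exact (generically_dual_apply_ne_zero hf).mono fun c hc hcp =>
    hc (LinearMap.le_ker_iff_map.mpr hfT hcp)

end LinearForm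

section Saturation

variable {K : Type} [Field K] {n : ℕ} {I : Ideal (MvPolynomial (Fin n) K)}

theorem IsSaturatedIdeal.mem_of_forall_X_mul_mem (hsat : IsSaturatedIdeal I)
    {f : MvPolynomial (Fin n) K} (hf : ∀ a, X a * f ∈ I) : f ∈ I := by
  unfold IsSaturatedIdeal at hsat
  rw [← hsat, Submodule.colon_span, Submodule.mem_colon]
  rintro _ ⟨a, rfl⟩
  simpa [mul_comm] using hf a

theorem IsSaturatedIdeal.exists_X_notMem_of_mem_associatedPrimes (hsat : IsSaturatedIdeal I)
    {p : Ideal (MvPolynomial (Fin n) K)}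
    (hp : p ∈ associatedPrimes (MvPolynomial (Fin n) K) (MvPolynomial (Fin n) K ⧸ I)) :
    ∃ a, X a ∉ p := by
  obtain ⟨hprime, x, rfl⟩ := isAssociatedPrime_iff.mp hp
  obtain ⟨f, rfl⟩ := Ideal.Quotient.mk_surjective x
  by_contra! h
  have hf : f ∈ I := hsat.mem_of_forall_X_mul_mem fun a => by
    rw [← Ideal.Quotient.eq_zero_iff_mem, map_mul]
    exact Submodule.mem_colon_singleton.mp (h a)
  exact hprime.ne_top (by simp [Ideal.Quotient.eq_zero_iff_mem.mpr hf])

theorem IsSaturatedIdeal.generically_isSMulRegular (hsat : IsSaturatedIdeal I) :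
    Generically K 1 n fun c => IsSMulRegular (MvPolynomial (Fin n) K ⧸ I) (linearForm (c 0)) := by
  have hfin := associatedPrimes.finite (MvPolynomial (Fin n) K) (MvPolynomial (Fin n) K ⧸ I)
  refine (Generically.finset_forall (Q := fun p c => linearForm (c 0) ∉ p) hfin.toFinset
    fun p hp => ?_).mono fun c hc => ?_
  · obtain ⟨a, ha⟩ := hsat.exists_X_notMem_of_mem_associatedPrimes (hfin.mem_toFinset.mp hp)
    exact generically_linearForm_notMem (p := p.restrictScalars K) ha
  · by_contra h
    have hmem : linearForm (c 0) ∈ {r | IsSMulRegular (MvPolynomial (Fin n) K ⧸ I) r}ᶜ := h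
    rw [← biUnion_associatedPrimes_eq_compl_regular] at hmem
    obtain ⟨p, hp, hcp⟩ := Set.mem_iUnion₂.mp hmem
    exact hc p (hfin.mem_toFinset.mpr hp) hcp

end Saturation

theorem Submodule.finrank_map_add_finrank_inf_ker {K V W : Type*} [Field K] [AddCommGroup V]
    [Module K V] [AddCommGroup W] [Module K W] (f : V →ₗ[K] W) (U : Submodule K V)
    [FiniteDimensional K U] :
    Module.finrank K (U.map f) + Module.finrank K ↥(U ⊓ LinearMap.ker f) =
      Module.finrank K U := by
  rw [← LinearMap.range_domRestrict, ← (f.domRestrict U).finrank_range_add_finrank_ker,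
    LinearMap.ker_domRestrict]
  congr 1
  rw [← LinearEquiv.finrank_eq (Submodule.comapSubtypeEquivOfLe inf_le_left), Submodule.comap_inf,
    Submodule.comap_subtype_self, top_inf_eq]

attribute [local instance] MvPolynomial.gradedAlgebra in
theorem MvPolynomial.homogeneousComponent_mul_of_isHomogeneous {σ R : Type*} [CommSemiring R]
    {L : MvPolynomial σ R} {i : ℕ} (hL : L.IsHomogeneous i) (g : MvPolynomial σ R) (d : ℕ) :
    homogeneousComponent (d + i) (L * g) = L * homogeneousComponent d g := by
  have := DirectSum.coe_decompose_mul_of_left_mem (homogeneousSubmodule σ R) (d + i) (b := g)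
    ((mem_homogeneousSubmodule i L).mpr hL)
  have hdec : ∀ (x : MvPolynomial σ R) (j : ℕ),
      (DirectSum.decompose (homogeneousSubmodule σ R) x j : MvPolynomial σ R) =
        homogeneousComponent j x :=
    decomposition.decompose'_apply
  rwa [hdec, hdec, if_pos (Nat.le_add_left i d), Nat.add_sub_cancel] at this

instance MvPolynomial.finiteDimensional_homogeneousSubmodule {K σ : Type*} [Field K] [Finite σ]
    (d : ℕ) : FiniteDimensional K (homogeneousSubmodule σ K d) :=
  Module.Finite.iff_fg.mpr (homogeneousSubmodule_fg σ K d)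

section HilbertFunction

variable {K : Type} [Field K] {n : ℕ} {I : Ideal (MvPolynomial (Fin n) K)}
  {L : MvPolynomial (Fin n) K}

noncomputable abbrev degreePart (I : Ideal (MvPolynomial (Fin n) K)) (d : ℕ) :
    Submodule K (MvPolynomial (Fin n) K ⧸ I) :=
  (homogeneousSubmodule (Fin n) K d).map (Ideal.Quotient.mkₐ K I).toLinearMap

theorem degreePart_map_factorₐ {J : Ideal (MvPolynomial (Fin n) K)} (hIJ : I ≤ J) (d : ℕ) :
    (degreePart I d).map (Ideal.Quotient.factorₐ K hIJ).toLinearMap = degreePart J d := by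
  rw [← Submodule.map_comp, ← AlgHom.comp_toLinearMap, Ideal.Quotient.factorₐ_comp_mk]

theorem degreePart_succ_inf_ker_factorₐ (hI : IsHomogeneousIdeal I) (hL : L.IsHomogeneous 1)
    (d : ℕ) :
    degreePart I (d + 1) ⊓ LinearMap.ker
        (Ideal.Quotient.factorₐ K (le_sup_left : I ≤ I ⊔ Ideal.span {L})).toLinearMap =
      (degreePart I d).map (LinearMap.mulLeft K (Ideal.Quotient.mk I L)) := by
  ext x
  rw [Submodule.mem_inf, LinearMap.mem_ker]
  constructor
  · rintro ⟨⟨f, hf, rfl⟩, hfJ⟩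
    obtain ⟨i, hi, s, hs, rfl⟩ := Submodule.mem_sup.mp (Ideal.Quotient.eq_zero_iff_mem.mp hfJ)
    obtain ⟨g, rfl⟩ := Ideal.mem_span_singleton'.mp hs
    refine ⟨_, Submodule.mem_map_of_mem (homogeneousComponent_mem d g), ?_⟩
    have hcomp := homogeneousComponent_of_mem (m := d + 1) (n := d + 1) hf
    rw [if_pos rfl, map_add, mul_comm g L, homogeneousComponent_mul_of_isHomogeneous hL] at hcomp
    simp only [AlgHom.toLinearMap_apply, Ideal.Quotient.mkₐ_eq_mk, LinearMap.mulLeft_apply]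
    rw [← map_mul, mul_comm g L, ← hcomp, map_add,
      Ideal.Quotient.eq_zero_iff_mem.mpr (hI i hi (d + 1)), zero_add]
  · rintro ⟨_, ⟨g, hg, rfl⟩, rfl⟩
    have hLg : L * g ∈ homogeneousSubmodule (Fin n) K (d + 1) := by
      rw [add_comm]
      exact hL.mul hg
    refine ⟨⟨L * g, hLg, by simp [Ideal.Quotient.mkₐ_eq_mk]⟩, ?_⟩
    simp only [AlgHom.toLinearMap_apply, Ideal.Quotient.mkₐ_eq_mk, LinearMap.mulLeft_apply]
    rw [← map_mul, Ideal.Quotient.factorₐ_apply_mk, Ideal.Quotient.eq_zero_iff_mem]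
    exact Ideal.mem_sup_right (Ideal.mul_mem_right g _ (Ideal.mem_span_singleton_self L))

theorem quotDim_sup_span_add_quotDim (hI : IsHomogeneousIdeal I) (hL : L.IsHomogeneous 1)
    (hreg : IsSMulRegular (MvPolynomial (Fin n) K ⧸ I) L) (d : ℕ) :
    quotDim K (I ⊔ Ideal.span {L}) (d + 1) + quotDim K I d = quotDim K I (d + 1) := by
  -- `L • x` on `P ⧸ I` is `mk L * x` by definition
  have hinj : Function.Injective (LinearMap.mulLeft K (Ideal.Quotient.mk I L)) := hreg
  calc quotDim K (I ⊔ Ideal.span {L}) (d + 1) + quotDim K I d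
      = Module.finrank K ((degreePart I (d + 1)).map
          (Ideal.Quotient.factorₐ K (le_sup_left : I ≤ I ⊔ Ideal.span {L})).toLinearMap)
        + Module.finrank K
          ((degreePart I d).map (LinearMap.mulLeft K (Ideal.Quotient.mk I L))) := by
        rw [degreePart_map_factorₐ,
          ← LinearEquiv.finrank_eq (Submodule.equivMapOfInjective _ hinj _)]
        rfl
    _ = quotDim K I (d + 1) := by
        rw [← degreePart_succ_inf_ker_factorₐ hI hL]
        exact Submodule.finrank_map_add_finrank_inf_ker _ _

end HilbertFunction

section SectionalMatrix

variable {K : Type} [Field K] {n : ℕ} {I : Ideal (MvPolynomial (Fin n) K)}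
  {M : ℕ → ℕ → ℕ}

theorem IsSectionalMatrix.apply_n_eq_quotDim [Infinite K] (hM : IsSectionalMatrix I M)
    (hn : 1 ≤ n) (d : ℕ) : M n d = quotDim K I d := by
  have h := hM n (Finset.mem_Icc.mpr ⟨hn, le_rfl⟩) d
  rw [Nat.sub_self] at h
  obtain ⟨c, hc⟩ := h.exists
  rwa [sectionIdeal, Set.range_eq_empty, Ideal.span_empty, sup_bot_eq, eq_comm] at hc

theorem IsSectionalMatrix.generically_quotDim_sup_span_eq (hM : IsSectionalMatrix I M)
    (hn : 2 ≤ n) (d : ℕ) :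
    Generically K 1 n fun c => quotDim K (I ⊔ Ideal.span {linearForm (c 0)}) d = M (n - 1) d := by
  have h := hM (n - 1) (Finset.mem_Icc.mpr ⟨by omega, by omega⟩) d
  rw [show n - (n - 1) = 1 by omega] at h
  simpa only [sectionIdeal_one] using h

end SectionalMatrix

/-- Let `I` be a saturated homogeneous ideal in `K[x_1,…,x_n]`
(`char K = 0`).  Then `M_{P/I}` has `n`-maximal growth in degree `δ` if and only if it
has `(n−1)`-maximal growth in degree `δ`. -/
theorem saturated_n_maximal_iff_n_sub_one_maximal
    {K : Type} [Field K] [CharZero K] {n : ℕ} (hn : 2 ≤ n)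
    (I : Ideal (MvPolynomial (Fin n) K)) (hI : IsHomogeneousIdeal I)
    (hsat : IsSaturatedIdeal I)
    (M : ℕ → ℕ → ℕ) (hM : IsSectionalMatrix I M) (δ : ℕ) :
    (M n (δ + 1) = ∑ j ∈ Finset.Icc 1 n, M j δ) ↔
    (M (n - 1) (δ + 1) = ∑ j ∈ Finset.Icc 1 (n - 1), M j δ) := by
  obtain ⟨c, hMc, hreg⟩ :=
    ((hM.generically_quotDim_sup_span_eq hn (δ + 1)).and hsat.generically_isSMulRegular).exists
  have hgrowth : M (n - 1) (δ + 1) + M n δ = M n (δ + 1) := by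
    rw [← hMc, hM.apply_n_eq_quotDim (by omega), hM.apply_n_eq_quotDim (by omega)]
    exact quotDim_sup_span_add_quotDim hI (isHomogeneous_linearForm_s17 _) hreg δ
  have hsum := Finset.sum_Icc_succ_top (by omega : 1 ≤ n - 1 + 1) fun j => M j δ
  rw [Nat.sub_add_cancel (by omega : 1 ≤ n)] at hsum
  omega
end
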